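/- arXiv:1604.07013 — 4 statements merged into one kernel-verified Lean document; each statement's English description precedes it below -/
import Mathlib

section
/- (Trigonometric cancellation) Let r₁, r₂ ≥ 0 and θ₁, θ₂ ∈ ℝ with θ := θ₁ − θ₂ satisfying cos θ ≤ 1/2. Then with η₀ = (√7 − 1)/2, one has |r₁ e^{iθ₁} + r₂ e^{iθ₂}| ≤ max{η₀ r₁ + r₂, r₁ + η₀ r₂}. -/
/-!
By the law of cosines, `|r₁e^{iθ₁} + r₂e^{iθ₂}|² = r₁² + r₂² + 2r₁r₂ cos θ ≤ r₁² + r₁r₂ + r₂²`.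
If `r₁ ≤ 2r₂`, this is at most `(η r₁ + r₂)²` as soon as `(1 - η²) r₁ ≤ (2η - 1) r₂`, which holds
for every `η ≥ 0` with `η² + η ≥ 3/2`; symmetrically if `r₂ ≤ 2r₁`. The constant
`η₀ = (√7 - 1)/2` is the positive root of `η² + η = 3/2`.
-/

open Complex

theorem norm_ofReal_mul_exp_add_ofReal_mul_exp_sq (r₁ r₂ θ₁ θ₂ : ℝ) :
    ‖(r₁ : ℂ) * exp (θ₁ * I) + (r₂ : ℂ) * exp (θ₂ * I)‖ ^ 2
      = r₁ ^ 2 + r₂ ^ 2 + 2 * r₁ * r₂ * Real.cos (θ₁ - θ₂) := by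
  rw [Complex.sq_norm, normSq_apply]
  simp only [add_re, add_im, mul_re, mul_im, ofReal_re, ofReal_im, exp_ofReal_mul_I_re,
    exp_ofReal_mul_I_im, Real.cos_sub]
  linear_combination r₁ ^ 2 * Real.sin_sq_add_cos_sq θ₁ + r₂ ^ 2 * Real.sin_sq_add_cos_sq θ₂

theorem sq_add_mul_add_sq_le_of_le_two_mul {η r₁ r₂ : ℝ} (hη : 0 ≤ η) (hη₂ : 3 ≤ 2 * (η ^ 2 + η))
    (h₁ : 0 ≤ r₁) (h₁₂ : r₁ ≤ 2 * r₂) :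
    r₁ ^ 2 + r₁ * r₂ + r₂ ^ 2 ≤ (η * r₁ + r₂) ^ 2 := by
  have hη_half : 1 / 2 ≤ η := by nlinarith
  nlinarith [mul_nonneg (mul_nonneg (sub_nonneg.2 hη_half) h₁) (sub_nonneg.2 h₁₂),
    mul_nonneg (sub_nonneg.2 hη₂) (sq_nonneg r₁)]

theorem sq_add_mul_add_sq_le_max_sq {η r₁ r₂ : ℝ} (hη : 0 ≤ η) (hη₂ : 3 ≤ 2 * (η ^ 2 + η))
    (h₁ : 0 ≤ r₁) (h₂ : 0 ≤ r₂) :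
    r₁ ^ 2 + r₁ * r₂ + r₂ ^ 2 ≤ max (η * r₁ + r₂) (r₁ + η * r₂) ^ 2 := by
  rcases le_total r₁ r₂ with h | h
  · calc r₁ ^ 2 + r₁ * r₂ + r₂ ^ 2 ≤ (η * r₁ + r₂) ^ 2 :=
          sq_add_mul_add_sq_le_of_le_two_mul hη hη₂ h₁ (by linarith)
      _ ≤ max (η * r₁ + r₂) (r₁ + η * r₂) ^ 2 :=
          pow_le_pow_left₀ (by positivity) (le_max_left _ _) 2
  · calc r₁ ^ 2 + r₁ * r₂ + r₂ ^ 2 = r₂ ^ 2 + r₂ * r₁ + r₁ ^ 2 := by ring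
      _ ≤ (r₁ + η * r₂) ^ 2 := by
          rw [add_comm r₁]
          exact sq_add_mul_add_sq_le_of_le_two_mul hη hη₂ h₂ (by linarith)
      _ ≤ max (η * r₁ + r₂) (r₁ + η * r₂) ^ 2 :=
          pow_le_pow_left₀ (by positivity) (le_max_right _ _) 2

theorem norm_ofReal_mul_exp_add_ofReal_mul_exp_le {η r₁ r₂ θ₁ θ₂ : ℝ} (hη : 0 ≤ η)
    (hη₂ : 3 ≤ 2 * (η ^ 2 + η)) (h₁ : 0 ≤ r₁) (h₂ : 0 ≤ r₂)
    (hcos : Real.cos (θ₁ - θ₂) ≤ 1 / 2) :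
    ‖(r₁ : ℂ) * exp (θ₁ * I) + (r₂ : ℂ) * exp (θ₂ * I)‖ ≤ max (η * r₁ + r₂) (r₁ + η * r₂) := by
  have hmax : 0 ≤ max (η * r₁ + r₂) (r₁ + η * r₂) := le_max_of_le_right (by positivity)
  rw [← sq_le_sq₀ (norm_nonneg _) hmax, norm_ofReal_mul_exp_add_ofReal_mul_exp_sq]
  calc r₁ ^ 2 + r₂ ^ 2 + 2 * r₁ * r₂ * Real.cos (θ₁ - θ₂)
      ≤ r₁ ^ 2 + r₁ * r₂ + r₂ ^ 2 := by nlinarith [mul_nonneg h₁ h₂]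
    _ ≤ max (η * r₁ + r₂) (r₁ + η * r₂) ^ 2 := sq_add_mul_add_sq_le_max_sq hη hη₂ h₁ h₂

theorem sqrt_seven_sub_one_div_two_sq_add_self :
    ((Real.sqrt 7 - 1) / 2) ^ 2 + (Real.sqrt 7 - 1) / 2 = 3 / 2 := by
  linear_combination Real.sq_sqrt (show (0 : ℝ) ≤ 7 by norm_num) / 4

/-- Trigonometric cancellation lemma: if `cos(θ₁ − θ₂) ≤ 1/2` then with
`η₀ = (√7 − 1)/2`, `|r₁e^{iθ₁} + r₂e^{iθ₂}| ≤ max{η₀r₁ + r₂, r₁ + η₀r₂}`. -/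
theorem stmt4 (r₁ r₂ θ₁ θ₂ : ℝ) (h1 : 0 ≤ r₁) (h2 : 0 ≤ r₂)
    (hcos : Real.cos (θ₁ - θ₂) ≤ 1 / 2) :
    ‖(r₁ : ℂ) * Complex.exp (θ₁ * Complex.I) + (r₂ : ℂ) * Complex.exp (θ₂ * Complex.I)‖
      ≤ max ((Real.sqrt 7 - 1) / 2 * r₁ + r₂) (r₁ + (Real.sqrt 7 - 1) / 2 * r₂) := by
  have hη : 0 ≤ (Real.sqrt 7 - 1) / 2 := by
    have : (1 : ℝ) ≤ Real.sqrt 7 := Real.one_le_sqrt.2 (by norm_num)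
    linarith
  exact norm_ofReal_mul_exp_add_ofReal_mul_exp_le hη
    (by linarith [sqrt_seven_sub_one_div_two_sq_add_self]) h1 h2 hcos
end

section
/- (Argument comparison) Let z₁, z₂ ∈ ℂ \ {0}, c > 0 and ω ∈ (−π, π). If |z₁| ≥ c, |z₂| ≥ c, and |z₁ − z₂| ≤ c (2 − 2cos ω)^{1/2}, then the angle between z₁ and z₂ (i.e. |arg(z₁/z₂)| taken in (−π, π]) is at most |ω|. -/
/-! Writing `θ` for the angle between `z₁` and `z₂`, the law of cosines gives
`|z₁ - z₂|² = (|z₁| - |z₂|)² + |z₁||z₂| (2 - 2 cos θ) ≥ c² (2 - 2 cos θ)`, so the hypothesis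
forces `cos ω ≤ cos θ`; as `θ ∈ [0, π]` and cosine decreases there, `θ ≤ |ω|`. In `ℂ` the
angle between nonzero `z₁`, `z₂` is `|arg (z₁ / z₂)|`. -/

open Real InnerProductGeometry

section

variable {V : Type*} [NormedAddCommGroup V] [InnerProductSpace ℝ V]

theorem InnerProductGeometry.sq_mul_two_sub_two_mul_cos_angle_le_norm_sub_sq {x y : V} {c : ℝ}
    (hc : 0 ≤ c) (hx : c ≤ ‖x‖) (hy : c ≤ ‖y‖) :
    c ^ 2 * (2 - 2 * cos (angle x y)) ≤ ‖x - y‖ ^ 2 := by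
  have law_cos := norm_sub_sq_eq_norm_sq_add_norm_sq_sub_two_mul_norm_mul_norm_mul_cos_angle x y
  have hcc : c ^ 2 ≤ ‖x‖ * ‖y‖ := by nlinarith
  have hcos : 0 ≤ 2 - 2 * cos (angle x y) := by linarith [cos_le_one (angle x y)]
  nlinarith [sq_nonneg (‖x‖ - ‖y‖), mul_le_mul_of_nonneg_right hcc hcos]

theorem InnerProductGeometry.angle_le_abs_of_norm_sub_le {x y : V} {c ω : ℝ}
    (hc : 0 < c) (hx : c ≤ ‖x‖) (hy : c ≤ ‖y‖)
    (hd : ‖x - y‖ ≤ c * √(2 - 2 * cos ω)) :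
    angle x y ≤ |ω| := by
  have hd_sq : ‖x - y‖ ^ 2 ≤ c ^ 2 * (2 - 2 * cos ω) := by
    have hω : 0 ≤ 2 - 2 * cos ω := by linarith [cos_le_one ω]
    calc ‖x - y‖ ^ 2 ≤ (c * √(2 - 2 * cos ω)) ^ 2 := pow_le_pow_left₀ (norm_nonneg _) hd 2
      _ = c ^ 2 * (2 - 2 * cos ω) := by rw [mul_pow, sq_sqrt hω]
  have hcos : cos |ω| ≤ cos (angle x y) := by
    rw [cos_abs]
    nlinarith [sq_mul_two_sub_two_mul_cos_angle_le_norm_sub_sq hc.le hx hy, pow_pos hc 2]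
  by_contra! hlt
  exact (cos_lt_cos_of_nonneg_of_le_pi (abs_nonneg ω) (angle_le_pi x y) hlt).not_ge hcos

end

theorem stmt5_general (z₁ z₂ : ℂ) (c ω : ℝ) (hc : 0 < c)
    (h1 : c ≤ ‖z₁‖) (h2 : c ≤ ‖z₂‖)
    (hd : ‖z₁ - z₂‖ ≤ c * Real.sqrt (2 - 2 * Real.cos ω)) :
    |Complex.arg (z₁ / z₂)| ≤ |ω| := by
  have hz₁ : z₁ ≠ 0 := norm_pos_iff.mp (hc.trans_le h1)
  have hz₂ : z₂ ≠ 0 := norm_pos_iff.mp (hc.trans_le h2)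
  rw [← Complex.angle_eq_abs_arg hz₁ hz₂]
  exact angle_le_abs_of_norm_sub_le hc h1 h2 hd

/-- Argument comparison: if `|z₁|, |z₂| ≥ c` and `|z₁ − z₂| ≤ c(2 − 2cos ω)^{1/2}`
for `ω ∈ (−π, π)`, then the angle between `z₁` and `z₂` is at most `|ω|`. -/
theorem stmt5 (z₁ z₂ : ℂ) (c ω : ℝ) (hc : 0 < c)
    (hz1 : z₁ ≠ 0) (hz2 : z₂ ≠ 0)
    (hω : ω ∈ Set.Ioo (-Real.pi) Real.pi)
    (h1 : c ≤ ‖z₁‖) (h2 : c ≤ ‖z₂‖)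
    (hd : ‖z₁ - z₂‖ ≤ c * Real.sqrt (2 - 2 * Real.cos ω)) :
    |Complex.arg (z₁ / z₂)| ≤ |ω| :=
  stmt5_general z₁ z₂ c ω hc h1 h2 hd
end

section
/- (Equivalence of BV seminorms in dimension one) For every function v : Y → ℂ of bounded variation on an interval Y ⊂ ℝ, one has (1/2) Var_Y v ≤ 𝔳𝔞𝔯_Y v ≤ 3 Var_Y v, where 𝔳𝔞𝔯_Y v = sup_{0<κ<1} (1/κ) ∫_Y Osc(v, B_κ(x)) dLeb(x). -/
/-!
Upper bound: the oscillation of `v` on a ball `B_κ(x)` is at most the variation of `v` on it,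
which is the increment `G (x + κ) - G (x - κ)` of the monotone cumulative variation
`G t = Var(v, Y ∩ (-∞, t))`. After a change of variables, the integral over `x` of such an
increment of a bounded monotone function reduces to two boundary integrals over intervals of
length `2κ`, so `∫_Y Osc(v, B_κ(x)) dx ≤ 2κ Var_Y v`.

Lower bound: given a partition of `Y`, take `κ` below all its positive gaps. A gap of length
at least `κ` splits into equal steps of length in `[κ/2, κ)`; every ball centred in a step
contains both of its endpoints, so each step contributes at least `κ/2` times the increment
of `v` across it to `∫_Y Osc(v, B_κ(x)) dx`.
-/

open MeasureTheory

/-- Oscillation of `v` on a set `J`. -/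
noncomputable def osc (v : ℝ → ℂ) (J : Set ℝ) : ℝ :=
  sSup {d | ∃ ξ ∈ J, ∃ ξ' ∈ J, d = ‖v ξ - v ξ'‖}

/-- Keller's generalized BV seminorm
`𝔳𝔞𝔯_Y v = sup_{0<κ<1} κ⁻¹ ∫_Y Osc(v, B_κ(x)) dLeb(x)`, where `B_κ(x) = (x−κ,x+κ) ∩ Y`. -/
noncomputable def kellerVar (v : ℝ → ℂ) (Y : Set ℝ) : ℝ :=
  ⨆ κ : Set.Ioo (0 : ℝ) 1,
    (1 / κ.1) * ∫ x in Y, osc v (Set.Ioo (x - κ.1) (x + κ.1) ∩ Y)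

open Set Filter Topology
open scoped ENNReal

lemma osc_nonneg (v : ℝ → ℂ) (J : Set ℝ) : 0 ≤ osc v J :=
  Real.sSup_nonneg (by rintro _ ⟨ξ, -, ξ', -, rfl⟩; positivity)

section Osc

variable {v : ℝ → ℂ} {J S : Set ℝ}

lemma norm_sub_le_toReal_eVariationOn (hS : eVariationOn v S ≠ ⊤) {x y : ℝ}
    (hx : x ∈ S) (hy : y ∈ S) : ‖v x - v y‖ ≤ (eVariationOn v S).toReal := by
  rw [← dist_eq_norm, dist_edist]
  exact ENNReal.toReal_mono hS (eVariationOn.edist_le v hx hy)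

lemma osc_le_toReal_eVariationOn (hS : eVariationOn v S ≠ ⊤) (hJS : J ⊆ S) :
    osc v J ≤ (eVariationOn v S).toReal :=
  Real.sSup_le (fun _ ⟨_, hξ, _, hξ', hd⟩ =>
    hd ▸ norm_sub_le_toReal_eVariationOn hS (hJS hξ) (hJS hξ')) ENNReal.toReal_nonneg

lemma norm_sub_le_osc (hS : eVariationOn v S ≠ ⊤) (hJS : J ⊆ S) {ξ ξ' : ℝ}
    (hξ : ξ ∈ J) (hξ' : ξ' ∈ J) : ‖v ξ - v ξ'‖ ≤ osc v J := by
  refine le_csSup ⟨(eVariationOn v S).toReal, ?_⟩ ⟨ξ, hξ, ξ', hξ', rfl⟩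
  rintro _ ⟨η, hη, η', hη', rfl⟩
  exact norm_sub_le_toReal_eVariationOn hS (hJS hη) (hJS hη')

end Osc

/-- The integrand `x ↦ Osc(v, B_κ(x))` of `kellerVar`. -/
noncomputable def oscBall (v : ℝ → ℂ) (Y : Set ℝ) (κ x : ℝ) : ℝ :=
  osc v (Ioo (x - κ) (x + κ) ∩ Y)

lemma oscBall_nonneg (v : ℝ → ℂ) (Y : Set ℝ) (κ x : ℝ) : 0 ≤ oscBall v Y κ x :=
  osc_nonneg _ _

lemma mem_Ioo_sub_add_comm {x ξ κ : ℝ} : ξ ∈ Ioo (x - κ) (x + κ) ↔ x ∈ Ioo (ξ - κ) (ξ + κ) := by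
  simp only [mem_Ioo]; constructor <;> rintro ⟨h₁, h₂⟩ <;> constructor <;> linarith

section OscBall

variable {v : ℝ → ℂ} {Y : Set ℝ}

lemma lowerSemicontinuous_oscBall (hY : eVariationOn v Y ≠ ⊤) (κ : ℝ) :
    LowerSemicontinuous (oscBall v Y κ) := by
  intro x c hc
  by_cases hne : {d | ∃ ξ ∈ Ioo (x - κ) (x + κ) ∩ Y, ∃ ξ' ∈ Ioo (x - κ) (x + κ) ∩ Y,
      d = ‖v ξ - v ξ'‖}.Nonempty
  · obtain ⟨_, ⟨ξ, hξ, ξ', hξ', rfl⟩, hlt⟩ := exists_lt_of_lt_csSup hne hc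
    have hnear : ∀ᶠ y in 𝓝 x, y ∈ Ioo (ξ - κ) (ξ + κ) ∩ Ioo (ξ' - κ) (ξ' + κ) :=
      inter_mem (isOpen_Ioo.mem_nhds (mem_Ioo_sub_add_comm.1 hξ.1))
        (isOpen_Ioo.mem_nhds (mem_Ioo_sub_add_comm.1 hξ'.1))
    filter_upwards [hnear] with y hy
    exact hlt.trans_le (norm_sub_le_osc hY inter_subset_right
      ⟨mem_Ioo_sub_add_comm.2 hy.1, hξ.2⟩ ⟨mem_Ioo_sub_add_comm.2 hy.2, hξ'.2⟩)
  · have hc0 : c < 0 := by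
      rwa [oscBall, osc, not_nonempty_iff_eq_empty.1 hne, Real.sSup_empty] at hc
    exact Eventually.of_forall fun y => hc0.trans_le (osc_nonneg _ _)

lemma integrableOn_oscBall (hY : eVariationOn v Y ≠ ⊤) (κ : ℝ) {s : Set ℝ}
    (hs : volume s ≠ ∞) : IntegrableOn (oscBall v Y κ) s :=
  Measure.integrableOn_of_bounded (M := (eVariationOn v Y).toReal) hs
    (lowerSemicontinuous_oscBall hY κ).measurable.aestronglyMeasurable <|
    Eventually.of_forall fun x => by
      rw [Real.norm_of_nonneg (oscBall_nonneg v Y κ x)]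
      exact osc_le_toReal_eVariationOn hY inter_subset_right

lemma intervalIntegrable_oscBall (hY : eVariationOn v Y ≠ ⊤) (κ c d : ℝ) :
    IntervalIntegrable (oscBall v Y κ) volume c d :=
  (intervalIntegrable_iff).2 (integrableOn_oscBall hY κ measure_Ioc_lt_top.ne)

end OscBall

lemma Monotone.comp_add_const {G : ℝ → ℝ} (hG : Monotone G) (c : ℝ) :
    Monotone fun x => G (x + c) :=
  fun _ _ h => hG (by linarith)

lemma Monotone.comp_sub_const {G : ℝ → ℝ} (hG : Monotone G) (c : ℝ) :
    Monotone fun x => G (x - c) :=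
  fun _ _ h => hG (by linarith)

lemma Monotone.integral_comp_add_sub_comp_sub_le {G : ℝ → ℝ} (hG : Monotone G) {m M κ : ℝ}
    (hm : ∀ x, m ≤ G x) (hM : ∀ x, G x ≤ M) (hκ : 0 ≤ κ) (a b : ℝ) :
    ∫ x in a..b, (G (x + κ) - G (x - κ)) ≤ 2 * κ * (M - m) := by
  have hi : ∀ c d, IntervalIntegrable G volume c d := fun _ _ => hG.intervalIntegrable
  rw [intervalIntegral.integral_sub (hG.comp_add_const κ).intervalIntegrable
      (hG.comp_sub_const κ).intervalIntegrable,
    intervalIntegral.integral_comp_add_right, intervalIntegral.integral_comp_sub_right,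
    intervalIntegral.integral_interval_sub_interval_comm' (hi _ _) (hi _ _) (hi _ _)]
  have hupper : ∫ x in (b - κ)..(b + κ), G x ≤ 2 * κ * M := by
    calc ∫ x in (b - κ)..(b + κ), G x ≤ ∫ _ in (b - κ)..(b + κ), M :=
          intervalIntegral.integral_mono_on (by linarith) (hi _ _) intervalIntegrable_const
            fun x _ => hM x
      _ = 2 * κ * M := by simp only [intervalIntegral.integral_const, smul_eq_mul]; ring
  have hlower : 2 * κ * m ≤ ∫ x in (a - κ)..(a + κ), G x := by
    calc 2 * κ * m = ∫ _ in (a - κ)..(a + κ), m := by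
          simp only [intervalIntegral.integral_const, smul_eq_mul]; ring
      _ ≤ ∫ x in (a - κ)..(a + κ), G x :=
          intervalIntegral.integral_mono_on (by linarith) intervalIntegrable_const (hi _ _)
            fun x _ => hm x
  linarith

noncomputable def variationBelow (v : ℝ → ℂ) (Y : Set ℝ) (t : ℝ) : ℝ :=
  (eVariationOn v (Y ∩ Iio t)).toReal

section VariationBelow

variable {v : ℝ → ℂ} {Y : Set ℝ}

lemma eVariationOn_inter_ne_top (hY : eVariationOn v Y ≠ ⊤) (S : Set ℝ) :
    eVariationOn v (Y ∩ S) ≠ ⊤ :=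
  ne_top_of_le_ne_top hY (eVariationOn.mono v inter_subset_left)

lemma monotone_variationBelow (hY : eVariationOn v Y ≠ ⊤) : Monotone (variationBelow v Y) :=
  fun _ _ hst => ENNReal.toReal_mono (eVariationOn_inter_ne_top hY _)
    (eVariationOn.mono v (inter_subset_inter_right _ (Iio_subset_Iio hst)))

lemma variationBelow_le (hY : eVariationOn v Y ≠ ⊤) (t : ℝ) :
    variationBelow v Y t ≤ (eVariationOn v Y).toReal :=
  ENNReal.toReal_mono hY (eVariationOn.mono v inter_subset_left)

lemma toReal_eVariationOn_inter_Ico_le (hY : eVariationOn v Y ≠ ⊤) {s t : ℝ} (hst : s ≤ t) :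
    (eVariationOn v (Y ∩ Ico s t)).toReal ≤ variationBelow v Y t - variationBelow v Y s := by
  have hadd := eVariationOn.add_le_union v (s := Y ∩ Iio s) (t := Y ∩ Ico s t)
    fun _ hx _ hy => (hx.2.trans_le hy.2.1).le
  rw [← inter_union_distrib_left, Iio_union_Ico_eq_Iio hst] at hadd
  rw [le_sub_iff_add_le', variationBelow, variationBelow,
    ← ENNReal.toReal_add (eVariationOn_inter_ne_top hY _) (eVariationOn_inter_ne_top hY _)]
  exact ENNReal.toReal_mono (eVariationOn_inter_ne_top hY _) hadd

lemma oscBall_le_variationBelow_sub (hY : eVariationOn v Y ≠ ⊤) {κ : ℝ} (hκ : 0 ≤ κ) (x : ℝ) :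
    oscBall v Y κ x ≤ variationBelow v Y (x + κ) - variationBelow v Y (x - κ) :=
  (osc_le_toReal_eVariationOn (eVariationOn_inter_ne_top hY (Ico (x - κ) (x + κ)))
    fun _ hξ => ⟨hξ.2, hξ.1.1.le, hξ.1.2⟩).trans
    (toReal_eVariationOn_inter_Ico_le hY (by linarith))

end VariationBelow

section UpperBound

variable {a b : ℝ} {v : ℝ → ℂ}

lemma setIntegral_oscBall_le (hBV : eVariationOn v (Icc a b) ≠ ⊤) {κ : ℝ} (hκ : 0 ≤ κ) :
    ∫ x in Icc a b, oscBall v (Icc a b) κ x ≤ 2 * κ * (eVariationOn v (Icc a b)).toReal := by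
  rcases lt_or_ge b a with hba | hab
  · rw [Icc_eq_empty_of_lt hba, Measure.restrict_empty, integral_zero_measure]
    positivity
  set G := variationBelow v (Icc a b)
  have hG := monotone_variationBelow hBV
  rw [integral_Icc_eq_integral_Ioc, ← intervalIntegral.integral_of_le hab]
  calc ∫ x in a..b, oscBall v (Icc a b) κ x ≤ ∫ x in a..b, (G (x + κ) - G (x - κ)) :=
        intervalIntegral.integral_mono_on hab (intervalIntegrable_oscBall hBV κ a b)
          ((hG.comp_add_const κ).intervalIntegrable.sub
            (hG.comp_sub_const κ).intervalIntegrable)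
          fun x _ => oscBall_le_variationBelow_sub hBV hκ x
    _ ≤ 2 * κ * ((eVariationOn v (Icc a b)).toReal - 0) :=
        hG.integral_comp_add_sub_comp_sub_le (fun _ => ENNReal.toReal_nonneg)
          (variationBelow_le hBV) hκ a b
    _ = 2 * κ * (eVariationOn v (Icc a b)).toReal := by rw [sub_zero]

lemma one_div_mul_setIntegral_oscBall_le (hBV : eVariationOn v (Icc a b) ≠ ⊤) {κ : ℝ}
    (hκ : 0 < κ) :
    1 / κ * ∫ x in Icc a b, oscBall v (Icc a b) κ x ≤ 2 * (eVariationOn v (Icc a b)).toReal :=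
  calc 1 / κ * ∫ x in Icc a b, oscBall v (Icc a b) κ x
      ≤ 1 / κ * (2 * κ * (eVariationOn v (Icc a b)).toReal) := by
        gcongr
        exact setIntegral_oscBall_le hBV hκ.le
    _ = 2 * (eVariationOn v (Icc a b)).toReal := by field_simp

lemma kellerVar_Icc_le (hBV : eVariationOn v (Icc a b) ≠ ⊤) :
    kellerVar v (Icc a b) ≤ 2 * (eVariationOn v (Icc a b)).toReal :=
  have : Nonempty (Ioo (0 : ℝ) 1) := nonempty_Ioo_subtype one_pos
  ciSup_le fun κ => one_div_mul_setIntegral_oscBall_le hBV κ.2.1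

lemma le_kellerVar_Icc (hBV : eVariationOn v (Icc a b) ≠ ⊤) {κ : ℝ} (hκ : κ ∈ Ioo 0 1) :
    1 / κ * ∫ x in Icc a b, oscBall v (Icc a b) κ x ≤ kellerVar v (Icc a b) :=
  le_ciSup (f := fun κ : Ioo (0 : ℝ) 1 => 1 / κ.1 * ∫ x in Icc a b, oscBall v (Icc a b) κ.1 x)
    ⟨_, forall_mem_range.2 fun κ => one_div_mul_setIntegral_oscBall_le hBV κ.2.1⟩ ⟨κ, hκ⟩

end UpperBound

lemma exists_pos_nat_half_le_div_lt {g κ : ℝ} (hκ : 0 < κ) (hg : κ ≤ g) :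
    ∃ m : ℕ, 0 < m ∧ κ / 2 ≤ g / m ∧ g / m < κ := by
  set m := ⌊2 * g / κ⌋₊
  have h2 : (2 : ℝ) ≤ 2 * g / κ := by rw [le_div_iff₀ hκ]; linarith
  have hm_le : (m : ℝ) ≤ 2 * g / κ := Nat.floor_le (by linarith)
  have hm_gt : 2 * g / κ < m + 1 := Nat.lt_floor_add_one _
  have hm : (0 : ℝ) < m := by
    have : (1 : ℝ) ≤ m := by exact_mod_cast Nat.le_floor (by push_cast; linarith)
    linarith
  rw [le_div_iff₀ hκ] at hm_le
  rw [div_lt_iff₀ hκ] at hm_gt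
  refine ⟨m, by exact_mod_cast hm, ?_, ?_⟩
  · rw [le_div_iff₀ hm]; linarith
  · rw [div_lt_iff₀ hm]; linarith

lemma exists_mem_Ioo_forall_le_zero_or_le {ι : Type*} (s : Finset ι) (g : ι → ℝ) :
    ∃ κ ∈ Ioo (0 : ℝ) 1, ∀ i ∈ s, g i ≤ 0 ∨ κ ≤ g i := by
  have hev : ∀ᶠ κ in 𝓝[>] (0 : ℝ), κ < 1 ∧ ∀ i ∈ s, g i ≤ 0 ∨ κ ≤ g i := by
    refine ((eventually_lt_nhds one_pos).filter_mono nhdsWithin_le_nhds).and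
      ((eventually_all_finset s).2 fun i _ => ?_)
    rcases le_or_gt (g i) 0 with hi | hi
    · exact Eventually.of_forall fun _ => Or.inl hi
    · exact ((eventually_le_nhds hi).filter_mono nhdsWithin_le_nhds).mono fun _ => Or.inr
  obtain ⟨κ, ⟨hκ1, hgap⟩, hκ0⟩ := (hev.and self_mem_nhdsWithin).exists
  exact ⟨κ, ⟨hκ0, hκ1⟩, hgap⟩

section BallIntegral

variable {v : ℝ → ℂ} {Y : Set ℝ} {κ : ℝ}

lemma mul_norm_sub_le_integral_oscBall (hY : eVariationOn v Y ≠ ⊤) {c d : ℝ} (hc : c ∈ Y)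
    (hd : d ∈ Y) (hcd : c ≤ d) (hdc : d - c < κ) :
    (d - c) * ‖v d - v c‖ ≤ ∫ x in c..d, oscBall v Y κ x := by
  have hball : ∀ x ∈ Icc c d, ∀ ξ ∈ Icc c d, ξ ∈ Ioo (x - κ) (x + κ) := fun x hx ξ hξ =>
    ⟨by linarith [hx.2, hξ.1], by linarith [hx.1, hξ.2]⟩
  calc (d - c) * ‖v d - v c‖ = ∫ _ in c..d, ‖v d - v c‖ := by
        rw [intervalIntegral.integral_const, smul_eq_mul]
    _ ≤ ∫ x in c..d, oscBall v Y κ x :=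
        intervalIntegral.integral_mono_on hcd intervalIntegrable_const
          (intervalIntegrable_oscBall hY κ c d) fun x hx =>
            norm_sub_le_osc hY inter_subset_right ⟨hball x hx d (right_mem_Icc.2 hcd), hd⟩
              ⟨hball x hx c (left_mem_Icc.2 hcd), hc⟩

lemma half_mul_norm_sub_le_integral_oscBall (hY : eVariationOn v Y ≠ ⊤) (hYc : Y.OrdConnected)
    (hκ : 0 < κ) {c d : ℝ} (hc : c ∈ Y) (hd : d ∈ Y) (hcd : c ≤ d)
    (hgap : d - c ≤ 0 ∨ κ ≤ d - c) :
    κ / 2 * ‖v d - v c‖ ≤ ∫ x in c..d, oscBall v Y κ x := by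
  rcases hgap with hdc | hgap
  · obtain rfl : d = c := by linarith
    simp
  obtain ⟨m, hm, hδ₁, hδ₂⟩ := exists_pos_nat_half_le_div_lt hκ hgap
  set δ := (d - c) / m
  have hδ : 0 ≤ δ := div_nonneg (sub_nonneg.2 hcd) m.cast_nonneg
  set r : ℕ → ℝ := fun t => c + t * δ
  have hr0 : r 0 = c := by simp [r]
  have hrm : r m = d := by simp only [r, δ]; field_simp; ring
  have hstep : ∀ t, r (t + 1) - r t = δ := fun t => by simp only [r]; push_cast; ring
  have hrY : ∀ t ≤ m, r t ∈ Y := fun t ht => hYc.out hc hd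
    ⟨le_add_of_nonneg_right (by positivity), by rw [← hrm]; simp only [r]; gcongr⟩
  calc κ / 2 * ‖v d - v c‖ ≤ κ / 2 * ∑ t ∈ Finset.range m, ‖v (r (t + 1)) - v (r t)‖ := by
        gcongr
        simpa [hr0, hrm, dist_eq_norm, norm_sub_rev, dist_comm] using
          dist_le_range_sum_dist (fun t => v (r t)) m
    _ ≤ ∑ t ∈ Finset.range m, (r (t + 1) - r t) * ‖v (r (t + 1)) - v (r t)‖ := by
        rw [Finset.mul_sum]
        gcongr with t
        rw [hstep]
        exact hδ₁
    _ ≤ ∑ t ∈ Finset.range m, ∫ x in r t..r (t + 1), oscBall v Y κ x :=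
        Finset.sum_le_sum fun t ht => mul_norm_sub_le_integral_oscBall hY
          (hrY t (Finset.mem_range.1 ht).le) (hrY (t + 1) (Finset.mem_range.1 ht))
          (by linarith [hstep t])
          (by rw [hstep]; exact hδ₂)
    _ = ∫ x in c..d, oscBall v Y κ x := by
        rw [intervalIntegral.sum_integral_adjacent_intervals fun t _ =>
          intervalIntegrable_oscBall hY κ _ _, hr0, hrm]

end BallIntegral

lemma kellerVar_nonneg (v : ℝ → ℂ) (Y : Set ℝ) : 0 ≤ kellerVar v Y :=
  Real.iSup_nonneg fun κ => mul_nonneg (one_div_nonneg.2 κ.2.1.le)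
    (integral_nonneg fun x => oscBall_nonneg v Y κ.1 x)

section LowerBound

variable {a b : ℝ} {v : ℝ → ℂ}

lemma sum_norm_sub_le_two_mul_kellerVar (hBV : eVariationOn v (Icc a b) ≠ ⊤) {u : ℕ → ℝ}
    (hu : Monotone u) (huab : ∀ i, u i ∈ Icc a b) (n : ℕ) :
    ∑ i ∈ Finset.range n, ‖v (u (i + 1)) - v (u i)‖ ≤ 2 * kellerVar v (Icc a b) := by
  obtain ⟨κ, hκ, hgap⟩ :=
    exists_mem_Ioo_forall_le_zero_or_le (Finset.range n) fun i => u (i + 1) - u i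
  have hsum : κ / 2 * ∑ i ∈ Finset.range n, ‖v (u (i + 1)) - v (u i)‖
      ≤ ∫ x in Icc a b, oscBall v (Icc a b) κ x :=
    calc κ / 2 * ∑ i ∈ Finset.range n, ‖v (u (i + 1)) - v (u i)‖
        ≤ ∑ i ∈ Finset.range n, ∫ x in u i..u (i + 1), oscBall v (Icc a b) κ x := by
          rw [Finset.mul_sum]
          exact Finset.sum_le_sum fun i hi => half_mul_norm_sub_le_integral_oscBall hBV
            ordConnected_Icc hκ.1 (huab i) (huab (i + 1)) (hu i.le_succ) (hgap i hi)
      _ = ∫ x in Ioc (u 0) (u n), oscBall v (Icc a b) κ x := by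
          rw [intervalIntegral.sum_integral_adjacent_intervals fun i _ =>
            intervalIntegrable_oscBall hBV κ _ _, intervalIntegral.integral_of_le (hu n.zero_le)]
      _ ≤ ∫ x in Icc a b, oscBall v (Icc a b) κ x :=
          setIntegral_mono_set (integrableOn_oscBall hBV κ measure_Icc_lt_top.ne)
            (ae_of_all _ (oscBall_nonneg v _ κ))
            (Ioc_subset_Icc_self.trans (Icc_subset_Icc (huab 0).1 (huab n).2)).eventuallyLE
  calc ∑ i ∈ Finset.range n, ‖v (u (i + 1)) - v (u i)‖
      = 2 * (1 / κ * (κ / 2 * ∑ i ∈ Finset.range n, ‖v (u (i + 1)) - v (u i)‖)) := by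
        field_simp [hκ.1.ne']
    _ ≤ 2 * kellerVar v (Icc a b) := by
        gcongr
        exact (mul_le_mul_of_nonneg_left hsum (one_div_nonneg.2 hκ.1.le)).trans
          (le_kellerVar_Icc hBV hκ)

lemma toReal_eVariationOn_le_two_mul_kellerVar (hBV : eVariationOn v (Icc a b) ≠ ⊤) :
    (eVariationOn v (Icc a b)).toReal ≤ 2 * kellerVar v (Icc a b) := by
  refine ENNReal.toReal_le_of_le_ofReal (mul_nonneg zero_le_two (kellerVar_nonneg v _))
    (iSup_le fun ⟨n, u, hu, huab⟩ => ?_)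
  calc ∑ i ∈ Finset.range n, edist (v (u (i + 1))) (v (u i))
      = ENNReal.ofReal (∑ i ∈ Finset.range n, ‖v (u (i + 1)) - v (u i)‖) := by
        rw [ENNReal.ofReal_sum_of_nonneg fun _ _ => norm_nonneg _]
        simp only [edist_dist, dist_eq_norm]
    _ ≤ ENNReal.ofReal (2 * kellerVar v (Icc a b)) :=
        ENNReal.ofReal_le_ofReal (sum_norm_sub_le_two_mul_kellerVar hBV hu huab n)

end LowerBound

/-- Equivalence of BV seminorms in dimension one:
`(1/2) Var_Y v ≤ 𝔳𝔞𝔯_Y v ≤ 3 Var_Y v`. -/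
theorem stmt7 (a b : ℝ) (v : ℝ → ℂ)
    (hBV : eVariationOn v (Set.Icc a b) ≠ ⊤) :
    (1 / 2) * (eVariationOn v (Set.Icc a b)).toReal ≤ kellerVar v (Set.Icc a b) ∧
      kellerVar v (Set.Icc a b) ≤ 3 * (eVariationOn v (Set.Icc a b)).toReal := by
  have hlower := toReal_eVariationOn_le_two_mul_kellerVar hBV
  have hupper := kellerVar_Icc_le hBV
  have hV : 0 ≤ (eVariationOn v (Icc a b)).toReal := ENNReal.toReal_nonneg
  constructor <;> linarith
end

section
/- Suppose F : Y → Y has inverse branches ℋ with contraction |h'| ≤ ρ₀^{−1}, roof function φ ≥ 1, eigenvalues λ_σ of the twisted transfer operator with λ_σ continuous in σ and λ₀ = 1, and suppose there exist ε₀ > 0 and C₃ < ∞ with sup_x Σ_{h: x ∈ dom(h)} |h'(x)| e^{ε₀ φ(h(x))} ≤ C₃. Then there exists ε ∈ (0,1) such that for all |σ| < ε and all n ≥ 1, λ_σ^{−n} sup_{h ∈ ℋₙ} sup_{x ∈ dom(h)} |h'(x)| e^{σ φₙ(h(x))} ≤ ρ^{−3n}, where ρ = ρ₀^{1/4}. 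-/
/-!
Write `a = h'(x)` and `y = φ(h x)` for one branch. Since `a ≤ ρ₀⁻¹` and `a e^{ε₀ y} ≤ C₃`,
Hölder interpolation `a e^{σ y} = a^{1-t} (a e^{ε₀ y})^t` with `t = σ/ε₀` gives
`a e^{σ y} ≤ ρ₀^{-(1-t)} C₃^t` for `0 ≤ σ ≤ ε₀`, while `a e^{σ y} ≤ ρ₀⁻¹` for `σ ≤ 0`.
At `σ = 0` these bounds equal `ρ₀⁻¹ < ρ₀^{-3/4} = λ₀ ρ^{-3}`, so by continuity a single
branch satisfies `a e^{σ y} ≤ λ_σ ρ^{-3}` for small `|σ|`. The derivative and the Birkhoff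
sum of a word of `n` branches factor over its letters, which gives the bound for all `n`.
-/

/-- Intermediate points of an inverse-branch word: `orbitPts h w x 0 = x`,
`orbitPts h w x (j+1) = h (w j) (orbitPts h w x j)`. An element of `ℋₙ` is the
composition `h (w (n−1)) ∘ ⋯ ∘ h (w 0)`, and these are the points at which
its derivative factors and Birkhoff sums are evaluated. -/
def orbitPts {ι : Type*} (h : ι → ℝ → ℝ) (w : ℕ → ι) (x : ℝ) : ℕ → ℝ
  | 0 => x
  | j + 1 => h (w j) (orbitPts h w x j)

open Real Set Filter Topology Finset

lemma mul_rpow_le_rpow_mul_rpow {a b r C t : ℝ} (ha : 0 ≤ a) (hb : 0 ≤ b) (har : a ≤ r)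
    (habC : a * b ≤ C) (ht₀ : 0 ≤ t) (ht₁ : t ≤ 1) :
    a * b ^ t ≤ r ^ (1 - t) * C ^ t := by
  have hsplit : a * b ^ t = a ^ (1 - t) * (a * b) ^ t := by
    rw [mul_rpow ha hb, ← mul_assoc, ← rpow_add' ha (by norm_num), sub_add_cancel, rpow_one]
  rw [hsplit]
  have hr : 0 ≤ r := ha.trans har
  gcongr

lemma mul_exp_le_max_of_mul_exp_le {a r C y ε σ : ℝ} (ha : 0 ≤ a) (har : a ≤ r) (hy : 0 ≤ y)
    (hε : 0 < ε) (hσ : σ ≤ ε) (hC : a * exp (ε * y) ≤ C) :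
    a * exp (σ * y) ≤ max r (r ^ (1 - σ / ε) * C ^ (σ / ε)) := by
  rcases le_or_gt σ 0 with hσ₀ | hσ₀
  · have hexp : exp (σ * y) ≤ 1 := exp_le_one_iff.2 (mul_nonpos_of_nonpos_of_nonneg hσ₀ hy)
    exact ((mul_le_of_le_one_right ha hexp).trans har).trans (le_max_left _ _)
  · have hexp : exp (σ * y) = exp (ε * y) ^ (σ / ε) := by
      rw [← exp_mul]
      congr 1
      field_simp
    rw [hexp]
    refine (mul_rpow_le_rpow_mul_rpow ha (exp_nonneg _) har hC (by positivity) ?_).trans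
      (le_max_right _ _)
    exact (div_le_one hε).2 hσ

lemma eventually_max_rpow_mul_rpow_lt {c : ℝ → ℝ} {r C ε : ℝ} (hc : ContinuousAt c 0)
    (hr : 0 < r) (hC : 0 < C) (hrc : r < c 0) :
    ∀ᶠ σ in 𝓝 0, max r (r ^ (1 - σ / ε) * C ^ (σ / ε)) < c σ := by
  have hcont : ContinuousAt (fun σ : ℝ => max r (r ^ (1 - σ / ε) * C ^ (σ / ε))) 0 :=
    continuousAt_const.max ((continuousAt_const.rpow (by fun_prop) (Or.inl hr.ne')).mul
      (continuousAt_const.rpow (by fun_prop) (Or.inl hC.ne')))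
  exact hcont.eventually_lt hc (by simpa using hrc)

lemma exists_mem_Ioo_forall_abs_lt_of_eventually_nhds_zero {P : ℝ → Prop}
    (hP : ∀ᶠ σ in 𝓝 0, P σ) : ∃ ε ∈ Ioo (0 : ℝ) 1, ∀ σ, |σ| < ε → P σ := by
  obtain ⟨δ, hδ, hδP⟩ := Metric.eventually_nhds_iff.mp hP
  refine ⟨min δ 1 / 2, ⟨by positivity, by linarith [min_le_right δ 1]⟩, fun σ hσ => hδP ?_⟩
  rw [dist_zero_right, norm_eq_abs]
  linarith [min_le_left δ 1]

lemma le_tsum_indicator_of_mem {ι : Type*} {f : ι → ℝ → ℝ} {s : ι → Set ℝ} {x : ℝ} {i : ι}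
    (hf : ∀ j y, 0 ≤ f j y) (hsum : Summable fun j => (s j).indicator (f j) x) (hx : x ∈ s i) :
    f i x ≤ ∑' j, (s j).indicator (f j) x := by
  simpa [indicator_of_mem hx] using
    hsum.le_tsum i (fun j _ => indicator_nonneg (fun y _ => hf j y) x)

lemma inv_lt_inv_rpow_one_div_four_pow_three {ρ₀ : ℝ} (hρ : 1 < ρ₀) :
    ρ₀⁻¹ < ((ρ₀ ^ ((1 : ℝ) / 4)) ^ 3)⁻¹ := by
  have hq : 1 < ρ₀ ^ ((1 : ℝ) / 4) := one_lt_rpow hρ (by norm_num)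
  have hq4 : (ρ₀ ^ ((1 : ℝ) / 4)) ^ 4 = ρ₀ := by
    rw [← rpow_natCast, ← rpow_mul (by linarith)]
    norm_num
  have hq3 : (ρ₀ ^ ((1 : ℝ) / 4)) ^ 3 < ρ₀ := by
    nth_rewrite 2 [← hq4]
    exact pow_lt_pow_right₀ hq (by norm_num)
  exact inv_strictAnti₀ (by positivity) hq3

theorem stmt10_general {ι : Type*} (h h' : ι → ℝ → ℝ) (dom : ι → Set ℝ)
    (φ lam : ℝ → ℝ) (ρ₀ ε₀ C₃ : ℝ)
    (hρ : 1 < ρ₀) (hε₀ : 0 < ε₀) (hC₃ : 0 < C₃)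
    (hφ : ∀ x, 1 ≤ φ x)
    (hder : ∀ i x, 0 ≤ h' i x ∧ h' i x ≤ ρ₀⁻¹)
    (hlamcont : Continuous lam) (hlam0 : lam 0 = 1)
    (hsummable : ∀ x : ℝ,
      Summable fun i => Set.indicator (dom i) (fun y => h' i y * Real.exp (ε₀ * φ (h i y))) x)
    (hsum : ∀ x : ℝ,
      (∑' i, Set.indicator (dom i) (fun y => h' i y * Real.exp (ε₀ * φ (h i y))) x) ≤ C₃) :
    ∃ ε ∈ Set.Ioo (0 : ℝ) 1, ∀ σ : ℝ, |σ| < ε → ∀ n : ℕ, 1 ≤ n → ∀ w : ℕ → ι, ∀ x : ℝ,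
      (∀ j < n, orbitPts h w x j ∈ dom (w j)) →
      (∏ j ∈ Finset.range n, h' (w j) (orbitPts h w x j)) *
          Real.exp (σ * ∑ j ∈ Finset.range n, φ (orbitPts h w x (j + 1)))
        ≤ lam σ ^ n * ((ρ₀ ^ ((1 : ℝ) / 4)) ^ (3 * n))⁻¹ := by
  set c : ℝ → ℝ := fun σ => lam σ * ((ρ₀ ^ ((1 : ℝ) / 4)) ^ 3)⁻¹
  have hc0 : ρ₀⁻¹ < c 0 := by
    simpa [c, hlam0] using inv_lt_inv_rpow_one_div_four_pow_three hρ
  have hbranch : ∀ i y, y ∈ dom i → h' i y * exp (ε₀ * φ (h i y)) ≤ C₃ := fun i y hy =>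
    (le_tsum_indicator_of_mem (fun j z => mul_nonneg (hder j z).1 (exp_nonneg _))
      (hsummable y) hy).trans (hsum y)
  obtain ⟨ε, hε, hsmall⟩ := exists_mem_Ioo_forall_abs_lt_of_eventually_nhds_zero
    ((eventually_lt_nhds hε₀).and (eventually_max_rpow_mul_rpow_lt (ε := ε₀)
      (by fun_prop) (by positivity) hC₃ hc0))
  refine ⟨ε, hε, fun σ hσ n _ w x hdom => ?_⟩
  obtain ⟨hσε₀, hmax⟩ := hsmall σ hσ
  have hstep : ∀ j ∈ range n,
      h' (w j) (orbitPts h w x j) * exp (σ * φ (orbitPts h w x (j + 1))) ≤ c σ := fun j hj =>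
    (mul_exp_le_max_of_mul_exp_le (hder _ _).1 (hder _ _).2 (zero_le_one.trans (hφ _)) hε₀
      hσε₀.le (hbranch _ _ (hdom j (mem_range.mp hj)))).trans hmax.le
  calc (∏ j ∈ range n, h' (w j) (orbitPts h w x j)) *
        exp (σ * ∑ j ∈ range n, φ (orbitPts h w x (j + 1)))
      = ∏ j ∈ range n, h' (w j) (orbitPts h w x j) * exp (σ * φ (orbitPts h w x (j + 1))) := by
        rw [mul_sum, exp_sum, prod_mul_distrib]
    _ ≤ ∏ _j ∈ range n, c σ :=
        prod_le_prod (fun j _ => mul_nonneg (hder _ _).1 (exp_nonneg _)) hstep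
    _ = lam σ ^ n * ((ρ₀ ^ ((1 : ℝ) / 4)) ^ (3 * n))⁻¹ := by
        rw [prod_const, card_range, mul_pow, inv_pow, pow_mul]

/-- If the branches contract by `ρ₀⁻¹`, the roof `φ ≥ 1` has an exponential tail
(`Σ_h |h'| e^{ε₀φ∘h} ≤ C₃`), and `λ_σ` is continuous with `λ₀ = 1`, then there is
`ε ∈ (0,1)` such that for all `|σ| < ε` and `n ≥ 1`,
`λ_σ^{−n} sup_{h∈ℋₙ} sup_{x∈dom h} |h'(x)| e^{σφₙ(h(x))} ≤ ρ^{−3n}` where `ρ = ρ₀^{1/4}`. -/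
theorem stmt10 {ι : Type*} (h h' : ι → ℝ → ℝ) (dom : ι → Set ℝ)
    (φ lam : ℝ → ℝ) (ρ₀ ε₀ C₃ : ℝ)
    (hρ : 1 < ρ₀) (hε₀ : 0 < ε₀) (hC₃ : 0 < C₃)
    (hφ : ∀ x, 1 ≤ φ x)
    (hder : ∀ i x, 0 ≤ h' i x ∧ h' i x ≤ ρ₀⁻¹)
    (hlamcont : Continuous lam) (hlam0 : lam 0 = 1) (hlampos : ∀ σ, 0 < lam σ)
    (hsummable : ∀ x : ℝ,
      Summable fun i => Set.indicator (dom i) (fun y => h' i y * Real.exp (ε₀ * φ (h i y))) x)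
    (hsum : ∀ x : ℝ,
      (∑' i, Set.indicator (dom i) (fun y => h' i y * Real.exp (ε₀ * φ (h i y))) x) ≤ C₃) :
    ∃ ε ∈ Set.Ioo (0 : ℝ) 1, ∀ σ : ℝ, |σ| < ε → ∀ n : ℕ, 1 ≤ n → ∀ w : ℕ → ι, ∀ x : ℝ,
      (∀ j < n, orbitPts h w x j ∈ dom (w j)) →
      (∏ j ∈ Finset.range n, h' (w j) (orbitPts h w x j)) *
          Real.exp (σ * ∑ j ∈ Finset.range n, φ (orbitPts h w x (j + 1)))
        ≤ lam σ ^ n * ((ρ₀ ^ ((1 : ℝ) / 4)) ^ (3 * n))⁻¹ :=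
  stmt10_general h h' dom φ lam ρ₀ ε₀ C₃ hρ hε₀ hC₃ hφ hder hlamcont hlam0 hsummable hsum
end
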